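/- Let n, k, r be integers with r > k ≥ 2 and n ≥ 2k. If H is a vertex-k-maximal r-uniform hypergraph on n vertices, then |E(H)| = C(n, r) − C(n − k, r), where C(a, b) denotes the binomial coefficient (equal to 0 when b > a). -/

import Mathlib

/-!
Equivalently, a vertex-`k`-maximal `H` has exactly `C(n - k, r)` non-edges; induct on `n`.
If `n ≤ k + 1`, no subhypergraph of `H + f` has connectivity above `k`, so `H` is complete.
Otherwise `κ(H) ≤ k` gives a vertex-cut `S` with `|S| ≤ k`, splitting `V ∖ S` into nonempty
sides `A`, `B` such that every edge avoiding `S` lies in one side.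

Adding a non-edge `f` creates a subhypergraph `K` of `H + f` with `κ(K) ≥ k + 1`. Every edge
of `K` other than `f` that avoids `S` lies in one side, so if `K` has vertices `a ∈ A`, `b ∈ B`
outside some `X ⊇ S` and `f` meets `X` (or lies in one side), then `X ∩ V(K)` separates `a`
from `b` and `|X| ≥ κ(K) > k`. Hence `H[S ∪ A]` and `H[S ∪ B]` are again
vertex-`k`-maximal, a non-edge meeting both sides avoids `S` (take `X = S`), and, as `r ≥ 3`,
a crossing `r`-set exists only if `|S| = k` (take `X = S ∪ {x}` for a third vertex `x ∈ f`).
So the non-edges of `H` are those of the two sides plus all `r`-subsets of `A ∪ B` meeting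
both, which number `C(|A|, r) + C(|B|, r) + (C(|A| + |B|, r) - C(|A|, r) - C(|B|, r))` when
`|S| = k`; when `|S| < k` every term vanishes.
-/

/-- A finite hypergraph: a finite vertex set together with a finite set of
non-empty edges, each a subset of the vertex set. -/
structure FinHypergraph where
  verts : Finset ℕ
  edges : Finset (Finset ℕ)
  edge_sub : ∀ e ∈ edges, e ⊆ verts
  edge_nonempty : ∀ e ∈ edges, e.Nonempty

namespace FinHypergraph

/-- `H` is `r`-uniform if every edge has cardinality `r`. -/
def IsUniform (H : FinHypergraph) (r : ℕ) : Prop := ∀ e ∈ H.edges, e.card = r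

/-- `H'` is a subhypergraph of `H`. -/
def IsSub (H' H : FinHypergraph) : Prop := H'.verts ⊆ H.verts ∧ H'.edges ⊆ H.edges

/-- Two vertices are adjacent if some edge contains both. -/
def Adj (H : FinHypergraph) (u v : ℕ) : Prop := ∃ e ∈ H.edges, u ∈ e ∧ v ∈ e

/-- `H` is connected if every pair of vertices is joined by a path
(equivalently, a walk, i.e. is reachable via the adjacency relation). -/
def Connected (H : FinHypergraph) : Prop :=
  ∀ u ∈ H.verts, ∀ v ∈ H.verts, Relation.ReflTransGen H.Adj u v

/-- The subhypergraph of `H` induced by the vertex set `Y`. -/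
def induce (H : FinHypergraph) (Y : Finset ℕ) : FinHypergraph where
  verts := H.verts ∩ Y
  edges := H.edges.filter (fun e => e ⊆ Y)
  edge_sub := by
    intro e he
    simp only [Finset.mem_filter] at he
    exact Finset.subset_inter (H.edge_sub e he.1) he.2
  edge_nonempty := by
    intro e he
    simp only [Finset.mem_filter] at he
    exact H.edge_nonempty e he.1

/-- `X` is a vertex-cut of `H` if deleting `X` leaves a disconnected hypergraph. -/
def IsVertexCut (H : FinHypergraph) (X : Finset ℕ) : Prop :=
  X ⊆ H.verts ∧ ¬ (H.induce (H.verts \ X)).Connected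

open Classical in
/-- The vertex-connectivity of `H`: the minimum cardinality of a vertex-cut if one
exists, and `|V(H)| - 1` otherwise. -/
noncomputable def kappa (H : FinHypergraph) : ℕ :=
  if ∃ X, H.IsVertexCut X then sInf {m | ∃ X, H.IsVertexCut X ∧ X.card = m}
  else H.verts.card - 1

/-- `κ̄(H)`: the maximum vertex-connectivity over all subhypergraphs of `H`. -/
noncomputable def kappaBar (H : FinHypergraph) : ℕ :=
  sSup {m | ∃ H' : FinHypergraph, H'.IsSub H ∧ H'.kappa = m}

/-- `H + e`: add the edge `e` (a non-empty subset of the vertices) to `H`. -/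
def addEdge (H : FinHypergraph) (e : Finset ℕ) : FinHypergraph where
  verts := H.verts
  edges := if e ⊆ H.verts ∧ e.Nonempty then insert e H.edges else H.edges
  edge_sub := by
    intro f hf
    split at hf
    · rcases Finset.mem_insert.mp hf with rfl | hf
      · exact (by assumption : f ⊆ H.verts ∧ f.Nonempty).1
      · exact H.edge_sub f hf
    · exact H.edge_sub f hf
  edge_nonempty := by
    intro f hf
    split at hf
    · rcases Finset.mem_insert.mp hf with rfl | hf
      · exact (by assumption : f ⊆ H.verts ∧ f.Nonempty).2
      · exact H.edge_nonempty f hf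
    · exact H.edge_nonempty f hf

/-- `H + F`: add a set `F` of edges to `H`. -/
def addEdges (H : FinHypergraph) (F : Finset (Finset ℕ)) : FinHypergraph where
  verts := H.verts
  edges := H.edges ∪ F.filter (fun e => e ⊆ H.verts ∧ e.Nonempty)
  edge_sub := by
    intro f hf
    rcases Finset.mem_union.mp hf with hf | hf
    · exact H.edge_sub f hf
    · exact (Finset.mem_filter.mp hf).2.1
  edge_nonempty := by
    intro f hf
    rcases Finset.mem_union.mp hf with hf | hf
    · exact H.edge_nonempty f hf
    · exact (Finset.mem_filter.mp hf).2.2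

/-- `H` is vertex-`k`-maximal (as an `r`-uniform hypergraph): `κ̄(H) ≤ k`, but adding
any edge of the complement `H^c` creates a subhypergraph of connectivity at least `k + 1`. -/
def VertexKMaximal (H : FinHypergraph) (r k : ℕ) : Prop :=
  H.IsUniform r ∧ H.kappaBar ≤ k ∧
    ∀ e : Finset ℕ, e ⊆ H.verts → e.card = r → e ∉ H.edges →
      k + 1 ≤ (H.addEdge e).kappaBar

/-- The complete `r`-uniform hypergraph on the vertex set `V`. -/
def completeHG (V : Finset ℕ) (r : ℕ) : FinHypergraph where
  verts := V
  edges := (V.powersetCard r).filter (fun e => e.Nonempty)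
  edge_sub := by
    intro e he
    simp only [Finset.mem_filter, Finset.mem_powersetCard] at he
    exact he.1.1
  edge_nonempty := by
    intro e he
    exact (Finset.mem_filter.mp he).2

/-- The hypergraph on vertex set `V` with no edges. -/
def emptyHG (V : Finset ℕ) : FinHypergraph where
  verts := V
  edges := ∅
  edge_sub := by simp
  edge_nonempty := by simp

/-- The `r`-join `H₁ ∨_r H₂`: the union of `H₁` and `H₂` together with all
`r`-element subsets of `V(H₁) ∪ V(H₂)` meeting both `V(H₁)` and `V(H₂)`. -/
def rJoin (H1 H2 : FinHypergraph) (r : ℕ) : FinHypergraph where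
  verts := H1.verts ∪ H2.verts
  edges := H1.edges ∪ H2.edges ∪
    ((H1.verts ∪ H2.verts).powersetCard r).filter
      (fun e => (e ∩ H1.verts).Nonempty ∧ (e ∩ H2.verts).Nonempty)
  edge_sub := by
    intro e he
    rcases Finset.mem_union.mp he with he | he
    · rcases Finset.mem_union.mp he with he | he
      · exact (H1.edge_sub e he).trans Finset.subset_union_left
      · exact (H2.edge_sub e he).trans Finset.subset_union_right
    · exact (Finset.mem_powersetCard.mp (Finset.mem_filter.mp he).1).1
  edge_nonempty := by
    intro e he
    rcases Finset.mem_union.mp he with he | he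
    · rcases Finset.mem_union.mp he with he | he
      · exact H1.edge_nonempty e he
      · exact H2.edge_nonempty e he
    · obtain ⟨x, hx⟩ := (Finset.mem_filter.mp he).2.1
      exact ⟨x, (Finset.mem_inter.mp hx).1⟩

/-- The union of two hypergraphs. -/
def hUnion (H1 H2 : FinHypergraph) : FinHypergraph where
  verts := H1.verts ∪ H2.verts
  edges := H1.edges ∪ H2.edges
  edge_sub := by
    intro e he
    rcases Finset.mem_union.mp he with he | he
    · exact (H1.edge_sub e he).trans Finset.subset_union_left
    · exact (H2.edge_sub e he).trans Finset.subset_union_right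
  edge_nonempty := by
    intro e he
    rcases Finset.mem_union.mp he with he | he
    · exact H1.edge_nonempty e he
    · exact H2.edge_nonempty e he

/-- The union of the hypergraphs `f 0, …, f (m-1)`. -/
def unionOver (m : ℕ) (f : ℕ → FinHypergraph) : FinHypergraph where
  verts := (Finset.range m).biUnion (fun i => (f i).verts)
  edges := (Finset.range m).biUnion (fun i => (f i).edges)
  edge_sub := by
    intro e he
    obtain ⟨i, hi, hei⟩ := Finset.mem_biUnion.mp he
    exact ((f i).edge_sub e hei).trans (Finset.subset_biUnion_of_mem (fun i => (f i).verts) hi)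
  edge_nonempty := by
    intro e he
    obtain ⟨i, _, hei⟩ := Finset.mem_biUnion.mp he
    exact (f i).edge_nonempty e hei

/-- `C` is a component of `G`: a maximal connected subhypergraph. -/
def IsComponent (G C : FinHypergraph) : Prop :=
  C.IsSub G ∧ C.Connected ∧
    ∀ C' : FinHypergraph, C'.IsSub G → C'.Connected → C.IsSub C' → C' = C

/-- `(S, H₁, H₂)` is a separation triple of `H`: `S` is a minimum vertex-cut,
`H₁ = H[S ∪ V(C₁)]` and `H₂ = H[S ∪ V(C₂)]`, where `C₁` is a component of `H - S`
and `C₂ = H - (S ∪ V(C₁))`. -/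
def IsSeparationTriple (H : FinHypergraph) (S : Finset ℕ) (H1 H2 : FinHypergraph) : Prop :=
  H.IsVertexCut S ∧ (∀ X : Finset ℕ, H.IsVertexCut X → S.card ≤ X.card) ∧
    ∃ C1 : FinHypergraph, IsComponent (H.induce (H.verts \ S)) C1 ∧
      H1 = H.induce (S ∪ C1.verts) ∧
      H2 = H.induce (S ∪ (H.verts \ (S ∪ C1.verts)))

end FinHypergraph

open Finset

section Crossing

variable {α : Type*} [DecidableEq α] {A B s t u : Finset α} {r : ℕ}

theorem subset_iff_disjoint_of_subset_union (htu : Disjoint t u) (hs : s ⊆ t ∪ u) :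
    s ⊆ t ↔ Disjoint s u :=
  ⟨fun h => htu.mono_left h, fun h => Disjoint.left_le_of_le_sup_right hs h⟩

theorem card_eq_card_filter_disjoint_add (N : Finset (Finset α))
    (h : ∀ f ∈ N, ¬Disjoint f A ∨ ¬Disjoint f B) :
    #N = #(N.filter (Disjoint · B)) + #(N.filter (Disjoint · A)) +
      #(N.filter fun f => ¬Disjoint f A ∧ ¬Disjoint f B) := by
  have hB := card_filter_add_card_filter_not (s := N) (Disjoint · B)
  have hA := card_filter_add_card_filter_not (s := N.filter fun f => ¬Disjoint f B) (Disjoint · A)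
  rw [filter_filter, filter_filter] at hA
  have hdisjA : N.filter (fun f => ¬Disjoint f B ∧ Disjoint f A) = N.filter (Disjoint · A) :=
    filter_congr fun f hf =>
      ⟨And.right, fun hfA => ⟨(h f hf).resolve_left (not_not.2 hfA), hfA⟩⟩
  have hcross : N.filter (fun f => ¬Disjoint f B ∧ ¬Disjoint f A) =
      N.filter (fun f => ¬Disjoint f A ∧ ¬Disjoint f B) :=
    filter_congr fun _ _ => and_comm
  rw [hdisjA, hcross] at hA
  omega

def crossing (A B : Finset α) (r : ℕ) : Finset (Finset α) :=
  ((A ∪ B).powersetCard r).filter fun f => ¬Disjoint f A ∧ ¬Disjoint f B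

theorem filter_disjoint_powersetCard_union (hAB : Disjoint A B) :
    ((A ∪ B).powersetCard r).filter (Disjoint · B) = A.powersetCard r := by
  ext f
  simp only [mem_filter, mem_powersetCard]
  constructor
  · rintro ⟨⟨hf, hfr⟩, hfB⟩
    exact ⟨(subset_iff_disjoint_of_subset_union hAB hf).2 hfB, hfr⟩
  · rintro ⟨hf, hfr⟩
    exact ⟨⟨hf.trans subset_union_left, hfr⟩, hAB.mono_left hf⟩

theorem card_crossing_add (hAB : Disjoint A B) (hr : 0 < r) :
    #(crossing A B r) + (#A).choose r + (#B).choose r = (#A + #B).choose r := by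
  have hsplit := card_eq_card_filter_disjoint_add ((A ∪ B).powersetCard r) (A := A) (B := B) (by
    intro f hf
    rw [mem_powersetCard] at hf
    obtain ⟨x, hx⟩ := card_pos.1 (hf.2 ▸ hr)
    rcases mem_union.1 (hf.1 hx) with hxA | hxB
    · exact .inl (not_disjoint_iff.2 ⟨x, hx, hxA⟩)
    · exact .inr (not_disjoint_iff.2 ⟨x, hx, hxB⟩))
  rw [filter_disjoint_powersetCard_union hAB, union_comm,
    filter_disjoint_powersetCard_union hAB.symm, union_comm, card_powersetCard,
    card_powersetCard, card_powersetCard, card_union_of_disjoint hAB] at hsplit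
  rw [crossing]
  omega

end Crossing

namespace FinHypergraph

variable {H K : FinHypergraph} {r k : ℕ} {S A B X f : Finset ℕ}

theorem isVertexCut_of_closed (hX : X ⊆ K.verts)
    (hA : ∀ g ∈ K.edges, Disjoint g X → ∀ u ∈ g, u ∈ A → g ⊆ A) {a b : ℕ}
    (ha : a ∈ K.verts \ X) (haA : a ∈ A) (hb : b ∈ K.verts \ X) (hbA : b ∉ A) :
    K.IsVertexCut X := by
  refine ⟨hX, fun hconn => hbA ?_⟩
  have hverts : (K.induce (K.verts \ X)).verts = K.verts \ X := inter_eq_right.2 sdiff_subset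
  have hclosed : ∀ w, Relation.ReflTransGen (K.induce (K.verts \ X)).Adj a w → w ∈ A := by
    intro w hw
    induction hw with
    | refl => exact haA
    | tail _ hadj ih =>
      obtain ⟨g, hg, hu, hv⟩ := hadj
      rw [induce, mem_filter, subset_sdiff] at hg
      exact hA g hg.1 hg.2.2 _ hu ih hv
  exact hclosed b (hconn a (by rwa [hverts]) b (by rwa [hverts]))

theorem kappa_le_card_of_isVertexCut (h : H.IsVertexCut X) : H.kappa ≤ #X := by
  rw [kappa, if_pos ⟨X, h⟩]
  exact Nat.sInf_le ⟨X, h, rfl⟩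

theorem IsVertexCut.card_add_two_le (h : H.IsVertexCut X) : #X + 2 ≤ #H.verts := by
  have hdisc := h.2
  unfold Connected at hdisc
  push Not at hdisc
  obtain ⟨u, hu, v, hv, huv⟩ := hdisc
  have hne : u ≠ v := fun h => huv (h ▸ .refl)
  have htwo : 1 < #(H.verts ∩ (H.verts \ X)) := one_lt_card.2 ⟨u, hu, v, hv, hne⟩
  rw [inter_eq_right.2 sdiff_subset, card_sdiff_of_subset h.1] at htwo
  have := card_le_card h.1
  omega

theorem kappa_le_card_sub_one (H : FinHypergraph) : H.kappa ≤ #H.verts - 1 := by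
  by_cases h : ∃ X, H.IsVertexCut X
  · obtain ⟨X, hX⟩ := h
    have := hX.card_add_two_le
    have := kappa_le_card_of_isVertexCut hX
    omega
  · rw [kappa, if_neg h]

theorem exists_isVertexCut_card_eq_kappa (h : H.kappa + 2 ≤ #H.verts) :
    ∃ X, H.IsVertexCut X ∧ #X = H.kappa := by
  by_cases hX : ∃ X, H.IsVertexCut X
  · rw [kappa, if_pos hX]
    obtain ⟨X, hX⟩ := hX
    exact Nat.sInf_mem (s := {m | ∃ X, H.IsVertexCut X ∧ #X = m}) ⟨#X, X, hX, rfl⟩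
  · rw [kappa, if_neg hX] at h
    omega

theorem bddAbove_kappa_of_isSub (H : FinHypergraph) :
    BddAbove {m | ∃ K : FinHypergraph, K.IsSub H ∧ K.kappa = m} := by
  refine ⟨#H.verts, ?_⟩
  rintro _ ⟨K, hK, rfl⟩
  exact K.kappa_le_card_sub_one.trans ((Nat.sub_le _ _).trans (card_le_card hK.1))

theorem kappa_le_kappaBar (h : K.IsSub H) : K.kappa ≤ H.kappaBar :=
  le_csSup H.bddAbove_kappa_of_isSub ⟨K, h, rfl⟩

theorem exists_isSub_kappa_eq_kappaBar (H : FinHypergraph) :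
    ∃ K : FinHypergraph, K.IsSub H ∧ K.kappa = H.kappaBar :=
  Nat.sSup_mem (s := {m | ∃ K : FinHypergraph, K.IsSub H ∧ K.kappa = m})
    ⟨H.kappa, H, ⟨subset_rfl, subset_rfl⟩, rfl⟩ H.bddAbove_kappa_of_isSub

theorem kappaBar_mono (h : K.IsSub H) : K.kappaBar ≤ H.kappaBar := by
  obtain ⟨L, hL, hLK⟩ := K.exists_isSub_kappa_eq_kappaBar
  exact hLK ▸ kappa_le_kappaBar ⟨hL.1.trans h.1, hL.2.trans h.2⟩

theorem isSub_addEdge_iff (hf : f ⊆ H.verts) (hne : f.Nonempty) :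
    K.IsSub (H.addEdge f) ↔ K.verts ⊆ H.verts ∧ K.edges ⊆ insert f H.edges := by
  simp only [IsSub, addEdge, if_pos (And.intro hf hne)]

def nonEdges (H : FinHypergraph) (r : ℕ) : Finset (Finset ℕ) :=
  H.verts.powersetCard r \ H.edges

theorem mem_nonEdges : f ∈ H.nonEdges r ↔ f ⊆ H.verts ∧ #f = r ∧ f ∉ H.edges := by
  rw [nonEdges, mem_sdiff, mem_powersetCard, and_assoc]

theorem card_edges_add_card_nonEdges (hH : H.IsUniform r) :
    #H.edges + #(H.nonEdges r) = (#H.verts).choose r := by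
  have hsub : H.edges ⊆ H.verts.powersetCard r := fun e he =>
    mem_powersetCard.2 ⟨H.edge_sub e he, hH e he⟩
  rw [nonEdges, card_sdiff_of_subset hsub, ← card_powersetCard]
  have := card_le_card hsub
  omega

theorem nonEdges_induce (H : FinHypergraph) (Y : Finset ℕ) (r : ℕ) :
    (H.induce Y).nonEdges r = (H.nonEdges r).filter (· ⊆ Y) := by
  ext f
  simp only [mem_filter, mem_nonEdges, induce, subset_inter_iff]
  tauto

theorem vertexKMaximal_iff : H.VertexKMaximal r k ↔ H.IsUniform r ∧ H.kappaBar ≤ k ∧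
    ∀ f ∈ H.nonEdges r, k + 1 ≤ (H.addEdge f).kappaBar := by
  simp only [VertexKMaximal, mem_nonEdges, and_imp]

theorem VertexKMaximal.kappa_le (hH : H.VertexKMaximal r k) : H.kappa ≤ k :=
  (kappa_le_kappaBar ⟨subset_rfl, subset_rfl⟩).trans hH.2.1

theorem VertexKMaximal.exists_kappa_lt (hH : H.VertexKMaximal r k) (hf : f ∈ H.nonEdges r)
    (hne : f.Nonempty) : ∃ K : FinHypergraph,
      K.verts ⊆ H.verts ∧ K.edges ⊆ insert f H.edges ∧ f ∈ K.edges ∧ k < K.kappa := by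
  obtain ⟨-, hbar, hmax⟩ := vertexKMaximal_iff.1 hH
  have hfmax := hmax f hf
  obtain ⟨K, hK, hKκ⟩ := (H.addEdge f).exists_isSub_kappa_eq_kappaBar
  rw [isSub_addEdge_iff (mem_nonEdges.1 hf).1 hne] at hK
  refine ⟨K, hK.1, hK.2, ?_, by omega⟩
  by_contra hfK
  have hKH : K.IsSub H := ⟨hK.1, fun g hg =>
    (mem_insert.1 (hK.2 hg)).resolve_left (ne_of_mem_of_not_mem hg hfK)⟩
  have := kappa_le_kappaBar hKH
  omega

theorem VertexKMaximal.nonEdges_eq_empty (hH : H.VertexKMaximal r k) (hr : 0 < r)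
    (hn : #H.verts ≤ k + 1) : H.nonEdges r = ∅ := by
  refine eq_empty_of_forall_notMem fun f hf => ?_
  have hne : f.Nonempty := card_pos.1 ((mem_nonEdges.1 hf).2.1 ▸ hr)
  obtain ⟨K, hKV, -, -, hK⟩ := hH.exists_kappa_lt hf hne
  have := K.kappa_le_card_sub_one
  have := card_le_card hKV
  omega

structure IsSeparation (H : FinHypergraph) (S A B : Finset ℕ) : Prop where
  subset : S ⊆ H.verts
  sdiff_eq : H.verts \ S = A ∪ B
  disjoint : Disjoint A B
  edge_subset : ∀ g ∈ H.edges, Disjoint g S → g ⊆ A ∨ g ⊆ B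

theorem IsVertexCut.exists_isSeparation (h : H.IsVertexCut S) :
    ∃ A B, H.IsSeparation S A B ∧ A.Nonempty ∧ B.Nonempty := by
  classical
  set G := H.induce (H.verts \ S)
  have hG : G.verts = H.verts \ S := inter_eq_right.2 sdiff_subset
  have hdisc := h.2
  unfold Connected at hdisc
  push Not at hdisc
  obtain ⟨u, hu, v, hv, huv⟩ := hdisc
  rw [hG] at hu hv
  refine ⟨(H.verts \ S).filter (Relation.ReflTransGen G.Adj u),
    (H.verts \ S).filter (fun w => ¬Relation.ReflTransGen G.Adj u w),
    ⟨h.1, (filter_union_filter_not_eq _ _).symm, disjoint_filter_filter_not _ _ _, ?_⟩,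
    ⟨u, mem_filter.2 ⟨hu, .refl⟩⟩, ⟨v, mem_filter.2 ⟨hv, huv⟩⟩⟩
  intro g hg hgS
  have hgV : g ⊆ H.verts \ S := subset_sdiff.2 ⟨H.edge_sub g hg, hgS⟩
  have hgG : g ∈ G.edges := mem_filter.2 ⟨hg, hgV⟩
  by_cases hgA : ∃ w ∈ g, Relation.ReflTransGen G.Adj u w
  · obtain ⟨w, hw, huw⟩ := hgA
    exact .inl fun y hy => mem_filter.2 ⟨hgV hy, huw.tail ⟨g, hgG, hw, hy⟩⟩
  · push Not at hgA
    exact .inr fun y hy => mem_filter.2 ⟨hgV hy, hgA y hy⟩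

namespace IsSeparation

theorem symm (hs : H.IsSeparation S A B) : H.IsSeparation S B A :=
  ⟨hs.subset, hs.sdiff_eq.trans (union_comm _ _), hs.disjoint.symm,
    fun g hg hgS => (hs.edge_subset g hg hgS).symm⟩

theorem disjoint_left (hs : H.IsSeparation S A B) : Disjoint S A :=
  disjoint_sdiff.mono_right (hs.sdiff_eq ▸ subset_union_left)

theorem verts_eq (hs : H.IsSeparation S A B) : H.verts = S ∪ A ∪ B := by
  rw [union_assoc, ← hs.sdiff_eq, union_sdiff_of_subset hs.subset]

theorem card_verts (hs : H.IsSeparation S A B) : #H.verts = #S + #A + #B := by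
  rw [hs.verts_eq, card_union_of_disjoint (disjoint_union_left.2 ⟨hs.symm.disjoint_left,
    hs.disjoint⟩), card_union_of_disjoint hs.disjoint_left]

theorem induce_verts (hs : H.IsSeparation S A B) : (H.induce (S ∪ A)).verts = S ∪ A :=
  inter_eq_right.2 (hs.verts_eq ▸ subset_union_left)

theorem card_induce_verts (hs : H.IsSeparation S A B) :
    #(H.induce (S ∪ A)).verts = #S + #A := by
  rw [hs.induce_verts, card_union_of_disjoint hs.disjoint_left]

theorem subset_union_left_iff (hs : H.IsSeparation S A B) (hf : f ⊆ H.verts) :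
    f ⊆ S ∪ A ↔ Disjoint f B :=
  subset_iff_disjoint_of_subset_union
    (disjoint_union_left.2 ⟨hs.symm.disjoint_left, hs.disjoint⟩) (hs.verts_eq ▸ hf)

theorem nonEdges_induce (hs : H.IsSeparation S A B) :
    (H.induce (S ∪ A)).nonEdges r = (H.nonEdges r).filter (Disjoint · B) := by
  rw [FinHypergraph.nonEdges_induce]
  exact filter_congr fun f hf => hs.subset_union_left_iff (mem_nonEdges.1 hf).1

theorem crossing_subset_nonEdges (hs : H.IsSeparation S A B) : crossing A B r ⊆ H.nonEdges r := by
  intro f hf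
  simp only [crossing, mem_filter, mem_powersetCard] at hf
  obtain ⟨⟨hfAB, hfr⟩, hfA, hfB⟩ := hf
  have hfV : f ⊆ H.verts \ S := hs.sdiff_eq ▸ hfAB
  refine mem_nonEdges.2 ⟨hfV.trans sdiff_subset, hfr, fun hfE => ?_⟩
  rcases hs.edge_subset f hfE (subset_sdiff.1 hfV).2 with h | h
  · exact hfB (hs.disjoint.mono_left h)
  · exact hfA (hs.disjoint.symm.mono_left h)

/-- The cut is `X ∩ V(K)`: an edge of `K` avoiding it avoids `S`, so it stays on one side. -/
theorem kappa_le (hs : H.IsSeparation S A B) (hSX : S ⊆ X) (hK : K.edges ⊆ insert f H.edges)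
    (hf : Disjoint f X → f ⊆ A ∨ f ⊆ B) {a b : ℕ} (ha : a ∈ K.verts) (haA : a ∈ A)
    (haX : a ∉ X) (hb : b ∈ K.verts) (hbB : b ∈ B) (hbX : b ∉ X) : K.kappa ≤ #X := by
  have hside : ∀ g ∈ K.edges, Disjoint g (X ∩ K.verts) → g ⊆ A ∨ g ⊆ B := by
    intro g hg hgX
    replace hgX : Disjoint g X := Finset.disjoint_left.2 fun x hxg hxX =>
      Finset.disjoint_left.1 hgX hxg (mem_inter.2 ⟨hxX, K.edge_sub g hg hxg⟩)
    rcases mem_insert.1 (hK hg) with rfl | hgH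
    · exact hf hgX
    · exact hs.edge_subset g hgH (hgX.mono_right hSX)
  have hcut : K.IsVertexCut (X ∩ K.verts) :=
    isVertexCut_of_closed inter_subset_right
      (fun g hg hgX u hu huA => (hside g hg hgX).resolve_right fun hgB =>
        Finset.disjoint_left.1 hs.disjoint huA (hgB hu))
      (mem_sdiff.2 ⟨ha, fun h => haX (mem_inter.1 h).1⟩) haA
      (mem_sdiff.2 ⟨hb, fun h => hbX (mem_inter.1 h).1⟩)
      (fun hbA => Finset.disjoint_left.1 hs.disjoint hbA hbB)
  exact (kappa_le_card_of_isVertexCut hcut).trans (card_le_card inter_subset_left)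

end IsSeparation

namespace VertexKMaximal

theorem lt_card_of_separation (hH : H.VertexKMaximal r k) (hs : H.IsSeparation S A B)
    (hSX : S ⊆ X) (hf : f ∈ H.nonEdges r) (hfX : ¬Disjoint f X) {a b : ℕ} (ha : a ∈ f)
    (haA : a ∈ A) (haX : a ∉ X) (hb : b ∈ f) (hbB : b ∈ B) (hbX : b ∉ X) : k < #X := by
  obtain ⟨K, -, hKE, hfK, hK⟩ := hH.exists_kappa_lt hf ⟨a, ha⟩
  have := hs.kappa_le hSX hKE (absurd · hfX) (K.edge_sub f hfK ha) haA haX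
    (K.edge_sub f hfK hb) hbB hbX
  omega

theorem induce_union (hH : H.VertexKMaximal r k) (hs : H.IsSeparation S A B)
    (hSk : #S ≤ k) (hkr : k < r) : (H.induce (S ∪ A)).VertexKMaximal r k := by
  obtain ⟨hunif, hbar, -⟩ := vertexKMaximal_iff.1 hH
  have hsub : (H.induce (S ∪ A)).IsSub H := ⟨inter_subset_left, filter_subset _ _⟩
  refine vertexKMaximal_iff.2
    ⟨fun e he => hunif e (hsub.2 he), (kappaBar_mono hsub).trans hbar, fun f hf => ?_⟩
  rw [FinHypergraph.nonEdges_induce, mem_filter] at hf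
  obtain ⟨hfN, hfSA⟩ := hf
  obtain ⟨a, haf, haS⟩ : ∃ a ∈ f, a ∉ S := by
    by_contra! hfS
    have := card_le_card (show f ⊆ S from hfS)
    have := (mem_nonEdges.1 hfN).2.1
    omega
  have haA : a ∈ A := (mem_union.1 (hfSA haf)).resolve_left haS
  obtain ⟨K, hKV, hKE, hfK, hK⟩ := hH.exists_kappa_lt hfN ⟨a, haf⟩
  have hKSA : K.verts ⊆ S ∪ A := by
    intro w hw
    refine (mem_union.1 (hs.verts_eq ▸ hKV hw)).resolve_right fun hwB => ?_
    have := hs.kappa_le subset_rfl hKE (fun hfS => .inl (hfS.left_le_of_le_sup_left hfSA))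
      (K.edge_sub f hfK haf) haA haS hw hwB (Finset.disjoint_right.1 hs.symm.disjoint_left hwB)
    omega
  have hKsub : K.IsSub ((H.induce (S ∪ A)).addEdge f) := by
    rw [isSub_addEdge_iff (by rwa [hs.induce_verts]) ⟨a, haf⟩, hs.induce_verts]
    refine ⟨hKSA, fun g hg => ?_⟩
    rcases mem_insert.1 (hKE hg) with rfl | hgH
    · exact mem_insert_self _ _
    · exact mem_insert_of_mem (mem_filter.2 ⟨hgH, (K.edge_sub g hg).trans hKSA⟩)
  have := kappa_le_kappaBar hKsub
  omega

theorem filter_nonEdges_eq_crossing (hH : H.VertexKMaximal r k) (hs : H.IsSeparation S A B)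
    (hSk : #S ≤ k) :
    (H.nonEdges r).filter (fun f => ¬Disjoint f A ∧ ¬Disjoint f B) = crossing A B r := by
  ext f
  refine ⟨fun hf => ?_, fun hf =>
    mem_filter.2 ⟨hs.crossing_subset_nonEdges hf, (mem_filter.1 hf).2⟩⟩
  obtain ⟨hfN, hfA, hfB⟩ := mem_filter.1 hf
  obtain ⟨a, haf, haA⟩ := not_disjoint_iff.1 hfA
  obtain ⟨b, hbf, hbB⟩ := not_disjoint_iff.1 hfB
  have hfS : Disjoint f S := by
    by_contra hfS
    have := hH.lt_card_of_separation hs subset_rfl hfN hfS haf haA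
      (Finset.disjoint_right.1 hs.disjoint_left haA) hbf hbB
      (Finset.disjoint_right.1 hs.symm.disjoint_left hbB)
    omega
  obtain ⟨hfV, hfr, -⟩ := mem_nonEdges.1 hfN
  have hfAB : f ⊆ A ∪ B := hs.sdiff_eq ▸ subset_sdiff.2 ⟨hfV, hfS⟩
  exact mem_filter.2 ⟨mem_powersetCard.2 ⟨hfAB, hfr⟩, hfA, hfB⟩

theorem card_nonEdges_eq_add (hH : H.VertexKMaximal r k) (hs : H.IsSeparation S A B)
    (hSk : #S ≤ k) (hkr : k < r) :
    #(H.nonEdges r) = #((H.induce (S ∪ A)).nonEdges r) + #((H.induce (S ∪ B)).nonEdges r) +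
      #(crossing A B r) := by
  have hcover : ∀ f ∈ H.nonEdges r, ¬Disjoint f A ∨ ¬Disjoint f B := by
    intro f hf
    obtain ⟨hfV, hfr, -⟩ := mem_nonEdges.1 hf
    by_contra! h
    have hfS : f ⊆ S := h.1.left_le_of_le_sup_right ((hs.subset_union_left_iff hfV).2 h.2)
    have := card_le_card hfS
    omega
  rw [card_eq_card_filter_disjoint_add _ hcover, hH.filter_nonEdges_eq_crossing hs hSk,
    hs.nonEdges_induce, hs.symm.nonEdges_induce]

theorem card_add_card_lt (hH : H.VertexKMaximal r k) (hs : H.IsSeparation S A B)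
    (hA : A.Nonempty) (hB : B.Nonempty) (hr : 3 ≤ r) (hSk : #S < k) : #A + #B < r := by
  by_contra! hAB
  obtain ⟨a, haA⟩ := hA
  obtain ⟨b, hbB⟩ := hB
  have haS := Finset.disjoint_right.1 hs.disjoint_left haA
  have hbS := Finset.disjoint_right.1 hs.symm.disjoint_left hbB
  have hab : a ≠ b := fun h => Finset.disjoint_left.1 hs.disjoint haA (h ▸ hbB)
  obtain ⟨f, habf, hfAB, hfr⟩ := exists_subsuperset_card_eq (n := r)
    (insert_subset (mem_union_left _ haA) (singleton_subset_iff.2 (mem_union_right _ hbB)))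
    (by rw [card_pair hab]; omega) (by rw [card_union_of_disjoint hs.disjoint]; exact hAB)
  have haf : a ∈ f := habf (mem_insert_self _ _)
  have hbf : b ∈ f := habf (mem_insert_of_mem (mem_singleton_self _))
  obtain ⟨x, hxf, hxab⟩ := exists_mem_notMem_of_card_lt_card (s := {a, b}) (t := f)
    (by rw [card_pair hab]; omega)
  rw [mem_insert, mem_singleton, not_or] at hxab
  have hf : f ∈ crossing A B r := mem_filter.2 ⟨mem_powersetCard.2 ⟨hfAB, hfr⟩,
    not_disjoint_iff.2 ⟨a, haf, haA⟩, not_disjoint_iff.2 ⟨b, hbf, hbB⟩⟩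
  have := hH.lt_card_of_separation hs (subset_insert x S) (hs.crossing_subset_nonEdges hf)
    (not_disjoint_iff.2 ⟨x, hxf, mem_insert_self x S⟩) haf haA
    (mem_insert.not.2 (not_or.2 ⟨fun h => hxab.1 h.symm, haS⟩)) hbf hbB
    (mem_insert.not.2 (not_or.2 ⟨fun h => hxab.2 h.symm, hbS⟩))
  have := card_insert_le x S
  omega

theorem card_nonEdges (hH : H.VertexKMaximal r k) (hr : 3 ≤ r) (hkr : k < r) :
    #(H.nonEdges r) = (#H.verts - k).choose r := by
  generalize hn : #H.verts = n
  induction n using Nat.strong_induction_on generalizing H with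
  | _ n ih =>
  rcases le_or_gt n (k + 1) with hsmall | hlarge
  · rw [hH.nonEdges_eq_empty (by omega) (by omega), card_empty,
      Nat.choose_eq_zero_of_lt (by omega)]
  obtain ⟨S, hS, hSκ⟩ := H.exists_isVertexCut_card_eq_kappa (by have := hH.kappa_le; omega)
  have hSk : #S ≤ k := hSκ ▸ hH.kappa_le
  obtain ⟨A, B, hs, hA, hB⟩ := hS.exists_isSeparation
  have hcard := hs.card_verts
  have := card_pos.2 hA
  have := card_pos.2 hB
  rw [hH.card_nonEdges_eq_add hs hSk hkr,
    ih (#S + #A) (by omega) (hH.induce_union hs hSk hkr) hs.card_induce_verts,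
    ih (#S + #B) (by omega) (hH.induce_union hs.symm hSk hkr) hs.symm.card_induce_verts]
  have hcross := card_crossing_add hs.disjoint (by omega : 0 < r)
  rcases hSk.eq_or_lt with hSk | hSk
  · rw [hSk, Nat.add_sub_cancel_left, Nat.add_sub_cancel_left, show n - k = #A + #B by omega]
    omega
  · have hAB := hH.card_add_card_lt hs hA hB hr hSk
    have hzero : ∀ m ≤ #A + #B, m.choose r = 0 := fun m hm =>
      Nat.choose_eq_zero_of_lt (by omega)
    rw [hzero (#S + #A - k) (by omega), hzero (#S + #B - k) (by omega), hzero (n - k) (by omega)]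
    have := hzero (#A + #B) le_rfl
    omega

end VertexKMaximal

end FinHypergraph

theorem stmt_13_general (n k r : ℕ) (hk : 2 ≤ k) (hkr : k < r)
    (H : FinHypergraph) (hcard : H.verts.card = n) (hH : H.VertexKMaximal r k) :
    H.edges.card = n.choose r - (n - k).choose r := by
  have hsum := FinHypergraph.card_edges_add_card_nonEdges hH.1
  rw [hH.card_nonEdges (by omega) hkr, hcard] at hsum
  omega

/-- For `r > k ≥ 2` and `n ≥ 2k`, every vertex-`k`-maximal
`r`-uniform hypergraph on `n` vertices has exactly `C(n,r) - C(n-k,r)` edges. -/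
theorem stmt_13 (n k r : ℕ) (hk : 2 ≤ k) (hkr : k < r) (hn : 2 * k ≤ n)
    (H : FinHypergraph) (hcard : H.verts.card = n) (hH : H.VertexKMaximal r k) :
    H.edges.card = n.choose r - (n - k).choose r :=
  stmt_13_general n k r hk hkr H hcard hH
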